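/- For n ≥ 2, every generating subset of the multiplicative semigroup A^+(B_n) contains at least one singleton-support element and at least one full-support (nonzero constant) element. -/

import Mathlib

def Bn (n : ℕ) : Type := Option (Fin n × Fin n)

def Bn.mul {n : ℕ} : Bn n → Bn n → Bn n
  | some (i, j), some (k, l) => if j = k then some (i, l) else none
  | _, _ => none

instance (n : ℕ) : Mul (Bn n) := ⟨Bn.mul⟩

instance (n : ℕ) : Semigroup (Bn n) where
  mul_assoc a b c := by
    show Bn.mul (Bn.mul a b) c = Bn.mul a (Bn.mul b c)
    rcases a with _ | ⟨i, j⟩ <;> rcases b with _ | ⟨k, l⟩ <;> rcases c with _ | ⟨p, q⟩ <;>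
      try rfl
    · show Bn.mul (@ite (Bn n) (j = k) _ (some (i, l)) none) none = none
      by_cases h1 : j = k <;> simp only [h1, ↓reduceIte] <;> rfl
    · show Bn.mul (@ite (Bn n) (j = k) _ (some (i, l)) none) (some (p, q)) =
        Bn.mul (some (i, j)) (@ite (Bn n) (l = p) _ (some (k, q)) none)
      have L : ∀ x y : Bn n, x = y → Bn.mul x (some (p, q)) = Bn.mul y (some (p, q)) :=
        fun _ _ h => h ▸ rfl
      have R : ∀ x y : Bn n, x = y → Bn.mul (some (i, j)) x = Bn.mul (some (i, j)) y :=
        fun _ _ h => h ▸ rfl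
      by_cases h1 : j = k <;> by_cases h2 : l = p
      · refine (L _ (some (i, l)) (if_pos h1)).trans (Eq.trans ?_ (R (some (k, q)) _ (if_pos h2).symm))
        exact (if_pos h2 : @ite (Bn n) (l = p) _ (some (i, q)) none = _).trans
          (if_pos h1 : @ite (Bn n) (j = k) _ (some (i, q)) none = _).symm
      · refine (L _ (some (i, l)) (if_pos h1)).trans (Eq.trans ?_ (R none _ (if_neg h2).symm))
        exact (if_neg h2 : @ite (Bn n) (l = p) _ (some (i, q)) none = _)
      · refine (L _ none (if_neg h1)).trans (Eq.trans ?_ (R (some (k, q)) _ (if_pos h2).symm))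
        exact (if_neg h1 : @ite (Bn n) (j = k) _ (some (i, q)) none = _).symm
      · refine (L _ none (if_neg h1)).trans (Eq.trans ?_ (R none _ (if_neg h2).symm))
        rfl

/-- Maps on `Bn n`, composed left-to-right: `x (f * g) = (x f) g`. -/
def MapBn (n : ℕ) : Type := Bn n → Bn n

instance (n : ℕ) : Monoid (MapBn n) where
  mul f g := fun x => g (f x)
  one := fun x => x
  mul_assoc _ _ _ := rfl
  one_mul _ := rfl
  mul_one _ := rfl

/-- The constant map `ξ_c`. -/
def constMap (n : ℕ) (c : Bn n) : MapBn n := fun _ => c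

/-- The `n`-support map `(p, q; σ)`, sending `(i, p) ↦ (iσ, q)` and all else to `θ`. -/
def nSuppMap (n : ℕ) (p q : Fin n) (σ : Equiv.Perm (Fin n)) : MapBn n :=
  fun x =>
    match x with
    | some (i, j) => if j = p then some (σ i, q) else none
    | none => none

instance (n : ℕ) : DecidableEq (Bn n) :=
  inferInstanceAs (DecidableEq (Option (Fin n × Fin n)))

/-- The singleton-support map `((k,l) → (p,q))`. -/
def sglMap (n : ℕ) (k l p q : Fin n) : MapBn n :=
  fun x => @ite _ (x = some (k, l)) (instDecidableEqBn n x (some (k, l))) (some (p, q)) none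

/-- The multiplicative semigroup reduct `A⁺(Bₙ)`, as a set of maps on `Bn n`. -/
def APlus (n : ℕ) : Set (MapBn n) :=
  {f | (∃ c, f = constMap n c) ∨ (∃ p q σ, f = nSuppMap n p q σ) ∨
       (∃ k l p q, f = sglMap n k l p q)}

/-- Independence of a subset of a semigroup. -/
def IndependentIn {S : Type*} [Semigroup S] (U : Set S) : Prop :=
  ∀ a ∈ U, a ∉ Subsemigroup.closure (U \ {a})

/-
A generating set must contain a singleton-support map because the constants together with the
`n`-support maps are closed under composition, and a constant map onto a nonzero element because
every other generator fixes `θ`, a property that is also closed under composition.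
-/

namespace MapBn

variable {n : ℕ}

lemma constMap_mul (c : Bn n) (g : MapBn n) : constMap n c * g = constMap n (g c) := rfl

lemma mul_constMap (f : MapBn n) (c : Bn n) : f * constMap n c = constMap n c := rfl

lemma nSuppMap_mul_nSuppMap (p q r : Fin n) (σ τ : Equiv.Perm (Fin n)) :
    nSuppMap n p q σ * nSuppMap n q r τ = nSuppMap n p r (σ.trans τ) := by
  funext x
  show nSuppMap n q r τ (nSuppMap n p q σ x) = _
  rcases x with _ | ⟨i, j⟩
  · rfl
  · by_cases hj : j = p <;> simp [nSuppMap, hj] <;> rfl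

lemma nSuppMap_mul_nSuppMap_of_ne {p q p' r : Fin n} (h : q ≠ p') (σ τ : Equiv.Perm (Fin n)) :
    nSuppMap n p q σ * nSuppMap n p' r τ = constMap n none := by
  funext x
  show nSuppMap n p' r τ (nSuppMap n p q σ x) = none
  rcases x with _ | ⟨i, j⟩
  · rfl
  · by_cases hj : j = p <;> simp [nSuppMap, hj, h] <;> rfl

def constOrNSupp (n : ℕ) : Subsemigroup (MapBn n) where
  carrier := {f | (∃ c, f = constMap n c) ∨ ∃ p q σ, f = nSuppMap n p q σ}
  mul_mem' := by
    rintro f g (⟨c, rfl⟩ | ⟨p, q, σ, rfl⟩) (⟨c', rfl⟩ | ⟨p', r, τ, rfl⟩)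
    · exact Or.inl ⟨_, constMap_mul c _⟩
    · exact Or.inl ⟨_, constMap_mul c _⟩
    · exact Or.inl ⟨c', mul_constMap _ c'⟩
    · by_cases h : q = p'
      · subst h
        exact Or.inr ⟨p, r, σ.trans τ, nSuppMap_mul_nSuppMap p q r σ τ⟩
      · exact Or.inl ⟨none, nSuppMap_mul_nSuppMap_of_ne h σ τ⟩

def fixNone (n : ℕ) : Subsemigroup (MapBn n) where
  carrier := {f | f none = none}
  mul_mem' {_ g} hf hg := (congrArg g hf).trans hg

lemma sglMap_apply_self (k l p q : Fin n) : sglMap n k l p q (some (k, l)) = some (p, q) :=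
  if_pos rfl

lemma sglMap_apply_of_ne {k l : Fin n} {x : Bn n} (h : x ≠ some (k, l)) (p q : Fin n) :
    sglMap n k l p q x = none :=
  if_neg h

lemma sglMap_ne_constMap (k l p q : Fin n) (c : Bn n) : sglMap n k l p q ≠ constMap n c := by
  intro h
  have h₁ := (sglMap_apply_self k l p q).symm.trans (congrFun h (some (k, l)))
  have h₂ := (sglMap_apply_of_ne (Option.some_ne_none _).symm p q).symm.trans (congrFun h none)
  exact Option.some_ne_none _ (h₁.trans h₂.symm)

lemma sglMap_ne_nSuppMap [Nontrivial (Fin n)] (k l p q p' q' : Fin n) (σ : Equiv.Perm (Fin n)) :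
    sglMap n k l p q ≠ nSuppMap n p' q' σ := by
  intro h
  by_cases hl : l = p'
  · obtain ⟨i, hi⟩ := exists_ne k
    have := congrFun h (some (i, l))
    have hne : (some (i, l) : Bn n) ≠ some (k, l) := fun he ↦ hi (Prod.ext_iff.mp (Option.some.inj he)).1
    rw [sglMap_apply_of_ne hne] at this
    simp [nSuppMap, hl] at this
  · have := congrFun h (some (k, l))
    rw [sglMap_apply_self] at this
    simp [nSuppMap, hl] at this

lemma sglMap_not_mem_constOrNSupp [Nontrivial (Fin n)] (k l p q : Fin n) :
    sglMap n k l p q ∉ constOrNSupp n := by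
  rintro (⟨c, hc⟩ | ⟨p', q', σ, hσ⟩)
  · exact sglMap_ne_constMap k l p q c hc
  · exact sglMap_ne_nSuppMap k l p q p' q' σ hσ

lemma constMap_some_not_mem_fixNone (c : Fin n × Fin n) : constMap n (some c) ∉ fixNone n :=
  Option.some_ne_none c

lemma nSuppMap_mem_fixNone (p q : Fin n) (σ : Equiv.Perm (Fin n)) : nSuppMap n p q σ ∈ fixNone n :=
  rfl

lemma sglMap_mem_fixNone (k l p q : Fin n) : sglMap n k l p q ∈ fixNone n :=
  sglMap_apply_of_ne (Option.some_ne_none _).symm p q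

end MapBn

open MapBn

theorem generating_set_contains_sgl_and_const (n : ℕ) (hn : 2 ≤ n) (U : Set (MapBn n))
    (hU : U ⊆ APlus n) (hgen : (Subsemigroup.closure U : Set (MapBn n)) = APlus n) :
    (∃ f ∈ U, ∃ k l p q, f = sglMap n k l p q) ∧
    (∃ f ∈ U, ∃ c : Bn n, c ≠ none ∧ f = constMap n c) := by
  have : Nontrivial (Fin n) := Fin.nontrivial_iff_two_le.mpr hn
  have hAPlus_le {S : Subsemigroup (MapBn n)} (hS : U ⊆ S) : APlus n ⊆ S :=
    hgen ▸ Subsemigroup.closure_le.mpr hS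
  have z : Fin n := ⟨0, by omega⟩
  constructor
  · by_contra! hno
    have hU_le : U ⊆ constOrNSupp n := fun f hf ↦ by
      rcases hU hf with h | h | ⟨k, l, p, q, rfl⟩
      exacts [Or.inl h, Or.inr h, absurd rfl (hno _ hf k l p q)]
    exact sglMap_not_mem_constOrNSupp z z z z (hAPlus_le hU_le (Or.inr (Or.inr ⟨z, z, z, z, rfl⟩)))
  · by_contra! hno
    have hU_le : U ⊆ fixNone n := fun f hf ↦ by
      rcases hU hf with ⟨_ | c, rfl⟩ | ⟨p, q, σ, rfl⟩ | ⟨k, l, p, q, rfl⟩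
      · rfl
      · exact absurd rfl (hno _ hf (some c) (Option.some_ne_none c))
      · exact nSuppMap_mem_fixNone p q σ
      · exact sglMap_mem_fixNone k l p q
    exact constMap_some_not_mem_fixNone (z, z) (hAPlus_le hU_le (Or.inl ⟨_, rfl⟩))
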